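/- For the basis vector e of U ⊆ U⊕V one has (2/(5+√5))·Σ_{i=0}^{4} ζ^i ⟨e, ρ₀^i(e)⟩ = (√5 − 1)/2; that is, with respect to the ℤ[ζ]-basis e of U⊕V, the hermitian matrix of h restricted to U⊕V is ((√5−1)/2). -/

import Mathlib

open Matrix

/-- Gram matrix of `U ⊕ V` in the basis `e, f, x, y`. -/
def G₀ : Matrix (Fin 4) (Fin 4) ℤ :=
  !![0, 1, 0, 0;
     1, 0, 0, 0;
     0, 0, 2, 1;
     0, 0, 1, -2]

/-- The bilinear form of `U ⊕ V`: `⟨u, v⟩ = uᵀ G₀ v`. -/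
def B (u v : Fin 4 → ℤ) : ℤ := u ⬝ᵥ G₀.mulVec v

/-- The matrix of `ρ₀`: `ρ₀(e) = -f`, `ρ₀(f) = -e - f - y`, `ρ₀(x) = f - x`,
`ρ₀(y) = 3f - x + y`. -/
def ρ₀ : Matrix (Fin 4) (Fin 4) ℤ :=
  !![0, -1, 0, 0;
     -1, -1, 1, 3;
     0, 0, -1, -1;
     0, -1, 0, 1]

/-- `ζ = e^{4πi/5}`, a primitive 5th root of unity. -/
noncomputable def ζ : ℂ := Complex.exp (4 * Real.pi * Complex.I / 5)

/-- The basis vector `e` of `U`. -/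
def e : Fin 4 → ℤ := ![1, 0, 0, 0]

/-! The values `⟨e, ρ₀ⁱ e⟩ = 0, -1, 1, 1, -1` make the sum `ζ² + ζ³ - ζ - ζ⁴`. Pairing `ζᵏ` with
`ζ⁵⁻ᵏ = ζ⁻ᵏ` turns it into `2 cos (2π/5) - 2 cos (4π/5) = √5`, and `2√5 / (5 + √5) = (√5 - 1)/2`. -/

open Complex in
theorem exp_mul_I_pow_add_pow_sub {θ : ℝ} {n k : ℕ} (hn : exp (θ * I) ^ n = 1) (hk : k ≤ n) :
    exp (θ * I) ^ k + exp (θ * I) ^ (n - k) = 2 * (Real.cos (k * θ) : ℂ) := by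
  rw [pow_sub₀ _ (exp_ne_zero _) hk, hn, one_mul, ← exp_nat_mul, ← exp_neg, ofReal_cos,
    two_cos]
  push_cast
  ring_nf

open Real in
theorem Real.cos_two_pi_div_five : Real.cos (2 * π / 5) = (√5 - 1) / 4 := by
  rw [show 2 * π / 5 = 2 * (π / 5) by ring, Real.cos_two_mul, Real.cos_pi_div_five]
  nlinarith [Real.sq_sqrt (show (0 : ℝ) ≤ 5 by norm_num)]

open Real in
theorem Real.cos_four_pi_div_five : Real.cos (4 * π / 5) = -(1 + √5) / 4 := by
  rw [show 4 * π / 5 = π - π / 5 by ring, Real.cos_pi_sub, Real.cos_pi_div_five]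
  ring

theorem ζ_eq_exp_mul_I : ζ = Complex.exp ((4 * Real.pi / 5 : ℝ) * Complex.I) := by
  rw [ζ]
  push_cast
  ring_nf

theorem ζ_pow_five : ζ ^ 5 = 1 := by
  rw [ζ, ← Complex.exp_nat_mul, ← Complex.exp_nat_mul_two_pi_mul_I 2]
  push_cast
  ring_nf

theorem ζ_add_ζ_pow_four : ζ + ζ ^ 4 = 2 * (Real.cos (4 * Real.pi / 5) : ℂ) := by
  have h := exp_mul_I_pow_add_pow_sub (k := 1) (ζ_eq_exp_mul_I ▸ ζ_pow_five) (by norm_num)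
  rw [← ζ_eq_exp_mul_I] at h
  simpa only [Nat.cast_one, one_mul, pow_one] using h

theorem ζ_sq_add_ζ_pow_three : ζ ^ 2 + ζ ^ 3 = 2 * (Real.cos (2 * Real.pi / 5) : ℂ) := by
  have h := exp_mul_I_pow_add_pow_sub (k := 2) (ζ_eq_exp_mul_I ▸ ζ_pow_five) (by norm_num)
  rw [← ζ_eq_exp_mul_I, show ((2 : ℕ) : ℝ) * (4 * Real.pi / 5) = 2 * Real.pi - 2 * Real.pi / 5 by
    push_cast; ring, Real.cos_two_pi_sub] at h
  exact h

theorem sum_ζ_pow_mul_B_e_ρ₀_pow_e :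
    ∑ i ∈ Finset.range 5, ζ ^ i * (B e ((ρ₀ ^ i).mulVec e) : ℂ) = (ζ ^ 2 + ζ ^ 3) - (ζ + ζ ^ 4) := by
  simp only [Finset.sum_range_succ, Finset.sum_range_zero]
  rw [show B e ((ρ₀ ^ 0).mulVec e) = 0 by decide, show B e ((ρ₀ ^ 1).mulVec e) = -1 by decide,
    show B e ((ρ₀ ^ 2).mulVec e) = 1 by decide, show B e ((ρ₀ ^ 3).mulVec e) = 1 by decide,
    show B e ((ρ₀ ^ 4).mulVec e) = -1 by decide]
  push_cast
  ring

theorem stmt10 :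
    ((2 / (5 + Real.sqrt 5) : ℝ) : ℂ) *
      ∑ i ∈ Finset.range 5, ζ ^ i * (B e ((ρ₀ ^ i).mulVec e) : ℂ) =
      ((Real.sqrt 5 - 1) / 2 : ℝ) := by
  rw [sum_ζ_pow_mul_B_e_ρ₀_pow_e, ζ_add_ζ_pow_four, ζ_sq_add_ζ_pow_three,
    Real.cos_two_pi_div_five, Real.cos_four_pi_div_five]
  have h5 : √5 ^ 2 = 5 := Real.sq_sqrt (by norm_num)
  have key : 2 / (5 + √5) * (2 * ((√5 - 1) / 4) - 2 * (-(1 + √5) / 4)) = (√5 - 1) / 2 := by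
    field_simp
    nlinarith [h5]
  exact_mod_cast key
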